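/- arXiv:2511.02990 — 2 statements merged into one kernel-verified Lean document; each statement's English description precedes it below -/
import Mathlib

section
/- Let v be an inner vertex of a branch decomposition T with children v1 and v2. If Φ ∈ proj(v), then there exist Φ1 ∈ proj(v1) and Φ2 ∈ proj(v2) such that Φ^c = min{Φ1^c + Φ2^c, γ^c} for all c ∈ C̄_v. Conversely, for all Φ1 ∈ proj(v1) and Φ2 ∈ proj(v2) there is a unique Φ ∈ proj(v) such that Φ^c = min{Φ1^c + Φ2^c, γ^c} for all c ∈ C̄_v. -/
/-!
The constraint bound is additive over disjoint variable sets, and truncating at `γ`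
before adding does not change the truncated sum: `min (min a γ + min b γ) γ = min (a + b) γ`.
Hence an assignment `τ` of `Xv1 ∪ Xv2` gives `Φ1`, `Φ2` by restriction, and conversely
assignments `τ1` of `Xv1` and `τ2` of `Xv2` glue to one of `Xv1 ∪ Xv2`. Uniqueness holds
because every element of `proj C' X'` vanishes outside `C'`.
-/

open Finset

/-- A (translated) separable system with variable type `V`, constraint type `C` and
finite domain `D`.  The constraint set is `C = Cin ∪ Cge` (disjointly), where `Cin`
is the set of constraints of type `∈` (with target set `Γ c` whose largest element
is the threshold `γ c`) and `Cge` is the set of constraints of type `≥` (with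
threshold `γ c`).  Every constraint `c` has nonnegative summands `g c x : D → ℕ`. -/
structure SepSystem (V C D : Type) where
  /-- the summand functions `g^c_x : D → ℤ≥0` -/
  g : C → V → D → ℕ
  /-- the thresholds `γ^c` -/
  γ : C → ℕ
  /-- the target sets `Γ^c` for constraints in `C^∈` -/
  Γ : C → Finset ℕ
  /-- the set of constraints of type `∈` -/
  Cin : Finset C
  /-- the set of constraints of type `≥` -/
  Cge : Finset C
  /-- `C^∈` and `C^≥` are disjoint -/
  disj : Disjoint Cin Cge
  /-- every constraint is in `C^∈ ∪ C^≥` -/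
  cover : ∀ c, c ∈ Cin ∨ c ∈ Cge
  /-- for `c ∈ C^∈`, `γ^c` belongs to `Γ^c` … -/
  gammaMem : ∀ c ∈ Cin, γ c ∈ Γ c
  /-- … and is its largest element -/
  gammaMax : ∀ c ∈ Cin, ∀ a ∈ Γ c, a ≤ γ c

namespace SepSystem

variable {V C D : Type} [DecidableEq V] [DecidableEq C] [Fintype V] [Fintype C]

/-- The constraint bound `cb^c(τ)` of the assignment `τ` restricted to `X'`. -/
def cb (S : SepSystem V C D) (X' : Finset V) (τ : V → D) (c : C) : ℕ :=
  ∑ x ∈ X', S.g c x (τ x)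

/-- The map `C'/τ` (for `τ` restricted to `X'`), encoded as the function `C → ℕ`
that vanishes outside `C'`. -/
def cdiv (S : SepSystem V C D) (C' : Finset C) (X' : Finset V) (τ : V → D) : C → ℕ :=
  fun c => if c ∈ C' then min (S.cb X' τ c) (S.γ c) else 0

/-- The projection `proj(C', X') = { C'/τ : τ : X' → D }`. -/
def proj (S : SepSystem V C D) (C' : Finset C) (X' : Finset V) : Set (C → ℕ) :=
  { f | ∃ τ : V → D, f = S.cdiv C' X' τ }

end SepSystem

theorem Nat.min_min_add_min (a b n : ℕ) : min (min a n + min b n) n = min (a + b) n := by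
  omega

namespace SepSystem

variable {V C D : Type} (S : SepSystem V C D)

theorem cb_union [DecidableEq V] {X₁ X₂ : Finset V} (h : Disjoint X₁ X₂) (τ : V → D) (c : C) :
    S.cb (X₁ ∪ X₂) τ c = S.cb X₁ τ c + S.cb X₂ τ c :=
  sum_union h

theorem cb_congr {X : Finset V} {τ σ : V → D} (h : ∀ x ∈ X, τ x = σ x) (c : C) :
    S.cb X τ c = S.cb X σ c :=
  sum_congr rfl fun x hx => by rw [h x hx]

variable [DecidableEq C]

theorem cdiv_congr (C' : Finset C) {X : Finset V} {τ σ : V → D} (h : ∀ x ∈ X, τ x = σ x) :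
    S.cdiv C' X τ = S.cdiv C' X σ := by
  funext c
  simp only [cdiv, S.cb_congr h]

theorem cdiv_union_apply [DecidableEq V] {C' C₁ C₂ : Finset C} {X₁ X₂ : Finset V}
    (hX : Disjoint X₁ X₂) (τ : V → D) {c : C} (hc : c ∈ C') (hc₁ : c ∈ C₁) (hc₂ : c ∈ C₂) :
    S.cdiv C' (X₁ ∪ X₂) τ c = min (S.cdiv C₁ X₁ τ c + S.cdiv C₂ X₂ τ c) (S.γ c) := by
  simp only [cdiv, if_pos hc, if_pos hc₁, if_pos hc₂, S.cb_union hX, Nat.min_min_add_min]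

theorem apply_eq_zero_of_mem_proj {C' : Finset C} {X : Finset V} {Φ : C → ℕ}
    (hΦ : Φ ∈ S.proj C' X) {c : C} (hc : c ∉ C') : Φ c = 0 := by
  obtain ⟨τ, rfl⟩ := hΦ
  exact if_neg hc

theorem eq_of_mem_proj_of_eqOn {C' : Finset C} {X : Finset V} {Φ Ψ : C → ℕ}
    (hΦ : Φ ∈ S.proj C' X) (hΨ : Ψ ∈ S.proj C' X) (h : ∀ c ∈ C', Φ c = Ψ c) : Φ = Ψ := by
  funext c
  by_cases hc : c ∈ C'
  · exact h c hc
  · rw [S.apply_eq_zero_of_mem_proj hΦ hc, S.apply_eq_zero_of_mem_proj hΨ hc]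

end SepSystem

theorem SepSystem.proj_node_general {V C D : Type} [DecidableEq V] [DecidableEq C]
    [Fintype C] (S : SepSystem V C D)
    (Xv1 Xv2 : Finset V) (Cv1 Cv2 : Finset C)
    (hX : Disjoint Xv1 Xv2) :
    (∀ Φ ∈ S.proj (Cv1 ∪ Cv2)ᶜ (Xv1 ∪ Xv2),
      ∃ Φ1 ∈ S.proj Cv1ᶜ Xv1, ∃ Φ2 ∈ S.proj Cv2ᶜ Xv2,
        ∀ c ∈ (Cv1 ∪ Cv2)ᶜ, Φ c = min (Φ1 c + Φ2 c) (S.γ c)) ∧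
    (∀ Φ1 ∈ S.proj Cv1ᶜ Xv1, ∀ Φ2 ∈ S.proj Cv2ᶜ Xv2,
      ∃! Φ, Φ ∈ S.proj (Cv1 ∪ Cv2)ᶜ (Xv1 ∪ Xv2) ∧
        ∀ c ∈ (Cv1 ∪ Cv2)ᶜ, Φ c = min (Φ1 c + Φ2 c) (S.γ c)) := by
  have mem_compl_left_right : ∀ c ∈ (Cv1 ∪ Cv2)ᶜ, c ∈ Cv1ᶜ ∧ c ∈ Cv2ᶜ := fun c hc => by
    simpa only [compl_union, mem_inter] using hc
  constructor
  · rintro Φ ⟨τ, rfl⟩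
    refine ⟨_, ⟨τ, rfl⟩, _, ⟨τ, rfl⟩, fun c hc => ?_⟩
    obtain ⟨hc₁, hc₂⟩ := mem_compl_left_right c hc
    exact S.cdiv_union_apply hX τ hc hc₁ hc₂
  · rintro Φ1 ⟨τ1, rfl⟩ Φ2 ⟨τ2, rfl⟩
    set τ := Xv1.piecewise τ1 τ2
    have agree₁ : S.cdiv Cv1ᶜ Xv1 τ = S.cdiv Cv1ᶜ Xv1 τ1 :=
      S.cdiv_congr _ fun x hx => piecewise_eq_of_mem _ _ _ hx
    have agree₂ : S.cdiv Cv2ᶜ Xv2 τ = S.cdiv Cv2ᶜ Xv2 τ2 :=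
      S.cdiv_congr _ fun x hx => piecewise_eq_of_notMem _ _ _ (disjoint_right.mp hX hx)
    have glued : ∀ c ∈ (Cv1 ∪ Cv2)ᶜ, S.cdiv (Cv1 ∪ Cv2)ᶜ (Xv1 ∪ Xv2) τ c
        = min (S.cdiv Cv1ᶜ Xv1 τ1 c + S.cdiv Cv2ᶜ Xv2 τ2 c) (S.γ c) := fun c hc => by
      obtain ⟨hc₁, hc₂⟩ := mem_compl_left_right c hc
      rw [← agree₁, ← agree₂]
      exact S.cdiv_union_apply hX τ hc hc₁ hc₂
    refine ⟨_, ⟨⟨τ, rfl⟩, glued⟩, fun Φ ⟨hΦ, hΦeq⟩ => ?_⟩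
    exact S.eq_of_mem_proj_of_eqOn hΦ ⟨τ, rfl⟩ fun c hc => (hΦeq c hc).trans (glued c hc).symm

/-- Lemma: relation between `proj(v)`, `proj(v1)`, `proj(v2)` for an inner vertex `v`
with children `v1`, `v2`.  If `Φ ∈ proj(v)` then there are `Φ1 ∈ proj(v1)` and
`Φ2 ∈ proj(v2)` satisfying (L1); conversely for all `Φ1 ∈ proj(v1)`, `Φ2 ∈ proj(v2)`
there is a unique `Φ ∈ proj(v)` satisfying (L1). -/
theorem SepSystem.proj_node {V C D : Type} [DecidableEq V] [DecidableEq C]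
    [Fintype V] [Fintype C] (S : SepSystem V C D)
    (Xv1 Xv2 : Finset V) (Cv1 Cv2 : Finset C)
    (hX : Disjoint Xv1 Xv2) (hC : Disjoint Cv1 Cv2) :
    (∀ Φ ∈ S.proj (Cv1 ∪ Cv2)ᶜ (Xv1 ∪ Xv2),
      ∃ Φ1 ∈ S.proj Cv1ᶜ Xv1, ∃ Φ2 ∈ S.proj Cv2ᶜ Xv2,
        ∀ c ∈ (Cv1 ∪ Cv2)ᶜ, Φ c = min (Φ1 c + Φ2 c) (S.γ c)) ∧
    (∀ Φ1 ∈ S.proj Cv1ᶜ Xv1, ∀ Φ2 ∈ S.proj Cv2ᶜ Xv2,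
      ∃! Φ, Φ ∈ S.proj (Cv1 ∪ Cv2)ᶜ (Xv1 ∪ Xv2) ∧
        ∀ c ∈ (Cv1 ∪ Cv2)ᶜ, Φ c = min (Φ1 c + Φ2 c) (S.γ c)) :=
  SepSystem.proj_node_general S Xv1 Xv2 Cv1 Cv2 hX
end

section
/- Consider a separable system with C^∈ = ∅ and weights ω^c ∈ ℝ for every c ∈ C. Let v be an inner vertex of a branch decomposition T with children v1 and v2, let (Φ,Ψ), (Φ1,Ψ1), (Φ2,Ψ2) be linked shapes for v, v1, v2, let τ1 : X_{v1} → D have configuration Φ1 and τ2 : X_{v2} → D have configuration Φ2. Then ω^Ψ(τ1 ∪ τ2) = ω^{Ψ1}(τ1) + ω^{Ψ2}(τ2) + Σ_{c∈C_{v1}} ω^c · min{Φ2^c, γ^c − Ψ^c} + Σ_{c∈C_{v2}} ω^c · min{Φ1^c, γ^c − Ψ^c}. -/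
open Finset

/-- A (translated) separable system with `C^∈ = ∅`: all constraints are of type `≥`,
given by summands `g c x : D → ℕ` and thresholds `γ c`. -/
structure SepSystemGe (V C D : Type) where
  /-- the summand functions `g^c_x : D → ℤ≥0` -/
  g : C → V → D → ℕ
  /-- the thresholds `γ^c` -/
  γ : C → ℕ

namespace SepSystemGe

variable {V C D : Type} [DecidableEq V] [DecidableEq C] [Fintype V] [Fintype C]

/-- The constraint bound `cb^c(τ)` of the assignment `τ` restricted to `X'`. -/
def cb (S : SepSystemGe V C D) (X' : Finset V) (τ : V → D) (c : C) : ℕ :=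
  ∑ x ∈ X', S.g c x (τ x)

/-- The map `C'/τ` (for `τ` restricted to `X'`), encoded as the function `C → ℕ`
that vanishes outside `C'`. -/
def cdiv (S : SepSystemGe V C D) (C' : Finset C) (X' : Finset V) (τ : V → D) : C → ℕ :=
  fun c => if c ∈ C' then min (S.cb X' τ c) (S.γ c) else 0

/-- The projection `proj(C', X') = { C'/τ : τ : X' → D }`. -/
def proj (S : SepSystemGe V C D) (C' : Finset C) (X' : Finset V) : Set (C → ℕ) :=
  { f | ∃ τ : V → D, f = S.cdiv C' X' τ }

/-- `τ` (restricted to `X_v`) has configuration `Φ`, i.e. `Φ = C̄_v/τ`. -/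
def HasConfig (S : SepSystemGe V C D) (Xv : Finset V) (Cv : Finset C)
    (Φ : C → ℕ) (τ : V → D) : Prop :=
  Φ = S.cdiv Cvᶜ Xv τ

/-- The `Ψ`-weight `ω^Ψ(τ) = Σ_{c ∈ C_v} ω^c · min (cb^c(τ)) (γ^c - Ψ^c)`
(`min` taken in `ℤ`). -/
def wweight (S : SepSystemGe V C D) (ω : C → ℝ) (Xv : Finset V) (Cv : Finset C)
    (Ψ : C → ℕ) (τ : V → D) : ℝ :=
  ∑ c ∈ Cv, ω c * ((min (S.cb Xv τ c : ℤ) ((S.γ c : ℤ) - (Ψ c : ℤ)) : ℤ) : ℝ)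

/-- Linked shapes for an inner vertex with children `v1`, `v2` (here `C^∈ = ∅`, so a
triple of shapes is linked if the memberships and the equations (L1), (L2), (L3) hold). -/
def LinkedW (S : SepSystemGe V C D) (Xv1 Xv2 : Finset V) (Cv1 Cv2 : Finset C)
    (Φ Ψ Φ1 Ψ1 Φ2 Ψ2 : C → ℕ) : Prop :=
  Ψ ∈ S.proj (Cv1 ∪ Cv2) (Xv1 ∪ Xv2)ᶜ ∧
  Φ1 ∈ S.proj Cv1ᶜ Xv1 ∧
  Φ2 ∈ S.proj Cv2ᶜ Xv2 ∧
  Φ ∈ S.proj (Cv1 ∪ Cv2)ᶜ (Xv1 ∪ Xv2) ∧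
  Ψ1 ∈ S.proj Cv1 Xv1ᶜ ∧
  Ψ2 ∈ S.proj Cv2 Xv2ᶜ ∧
  (∀ c ∈ (Cv1 ∪ Cv2)ᶜ, Φ c = min (Φ1 c + Φ2 c) (S.γ c)) ∧
  (∀ c ∈ Cv1, Ψ1 c = min (Ψ c + Φ2 c) (S.γ c)) ∧
  (∀ c ∈ Cv2, Ψ2 c = min (Ψ c + Φ1 c) (S.γ c))

end SepSystemGe

/-- Capping `a + b` at the residual `g - p` is capping `b` there, plus capping `a` at the residual
left once (the capped) `b` has been added to `p`. -/
theorem Int.min_add_sub_split {a b g p f q : ℕ} (hf : f = min b g)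
    (hq : q = min (p + f) g) :
    min ((a + b : ℕ) : ℤ) ((g : ℤ) - p) = min (a : ℤ) ((g : ℤ) - q) + min (f : ℤ) ((g : ℤ) - p) := by
  omega

namespace SepSystemGe

variable {V C D : Type} (S : SepSystemGe V C D)

theorem cb_union [DecidableEq V] {X₁ X₂ : Finset V} (hX : Disjoint X₁ X₂) {τ τ₁ τ₂ : V → D}
    (h₁ : ∀ x ∈ X₁, τ x = τ₁ x) (h₂ : ∀ x ∈ X₂, τ x = τ₂ x) (c : C) :
    S.cb (X₁ ∪ X₂) τ c = S.cb X₁ τ₁ c + S.cb X₂ τ₂ c := by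
  rw [cb, sum_union hX]
  exact congr_arg₂ (· + ·) (sum_congr rfl fun x hx => by rw [h₁ x hx])
    (sum_congr rfl fun x hx => by rw [h₂ x hx])

theorem HasConfig.apply_of_notMem [DecidableEq C] [Fintype C] {S : SepSystemGe V C D}
    {X : Finset V} {Cv : Finset C} {Φ : C → ℕ} {τ : V → D} (h : S.HasConfig X Cv Φ τ)
    {c : C} (hc : c ∉ Cv) : Φ c = min (S.cb X τ c) (S.γ c) := by
  rw [h, cdiv, if_pos (mem_compl.mpr hc)]

theorem wweight_union_constraints [DecidableEq C] (ω : C → ℝ) (X : Finset V)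
    {C₁ C₂ : Finset C} (hC : Disjoint C₁ C₂) (Ψ : C → ℕ) (τ : V → D) :
    S.wweight ω X (C₁ ∪ C₂) Ψ τ = S.wweight ω X C₁ Ψ τ + S.wweight ω X C₂ Ψ τ :=
  sum_union hC

theorem wweight_eq_add_of_cb_eq_add (ω : C → ℝ) {X X' : Finset V} {Cv : Finset C}
    {Ψ Ψ' Φ' b : C → ℕ} {τ τ' : V → D} (hcb : ∀ c ∈ Cv, S.cb X τ c = S.cb X' τ' c + b c)
    (hΦ' : ∀ c ∈ Cv, Φ' c = min (b c) (S.γ c))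
    (hΨ' : ∀ c ∈ Cv, Ψ' c = min (Ψ c + Φ' c) (S.γ c)) :
    S.wweight ω X Cv Ψ τ = S.wweight ω X' Cv Ψ' τ'
      + ∑ c ∈ Cv, ω c * ((min (Φ' c : ℤ) ((S.γ c : ℤ) - (Ψ c : ℤ)) : ℤ) : ℝ) := by
  rw [wweight, wweight, ← sum_add_distrib]
  refine sum_congr rfl fun c hc => ?_
  rw [← mul_add, ← Int.cast_add, hcb c hc,
    Int.min_add_sub_split (hΦ' c hc) (hΨ' c hc)]

end SepSystemGe

/-- Lemma: for linked shapes `(Φ,Ψ)`, `(Φ1,Ψ1)`, `(Φ2,Ψ2)` at an inner vertex `v` with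
children `v1`, `v2`, and assignments `τ1` of configuration `Φ1`, `τ2` of configuration
`Φ2` with common extension `τ = τ1 ∪ τ2`:
`ω^Ψ(τ1 ∪ τ2) = ω^{Ψ1}(τ1) + ω^{Ψ2}(τ2) + Σ_{c ∈ C_{v1}} ω^c min (Φ2^c) (γ^c - Ψ^c)
 + Σ_{c ∈ C_{v2}} ω^c min (Φ1^c) (γ^c - Ψ^c)`. -/
theorem SepSystemGe.wweight_union {V C D : Type} [DecidableEq V] [DecidableEq C]
    [Fintype V] [Fintype C] (S : SepSystemGe V C D) (ω : C → ℝ)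
    (Xv1 Xv2 : Finset V) (Cv1 Cv2 : Finset C)
    (hX : Disjoint Xv1 Xv2) (hC : Disjoint Cv1 Cv2)
    (Φ Ψ Φ1 Ψ1 Φ2 Ψ2 : C → ℕ)
    (hlink : S.LinkedW Xv1 Xv2 Cv1 Cv2 Φ Ψ Φ1 Ψ1 Φ2 Ψ2)
    (τ1 τ2 τ : V → D)
    (h1 : ∀ x ∈ Xv1, τ x = τ1 x) (h2 : ∀ x ∈ Xv2, τ x = τ2 x)
    (hc1 : S.HasConfig Xv1 Cv1 Φ1 τ1) (hc2 : S.HasConfig Xv2 Cv2 Φ2 τ2) :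
    S.wweight ω (Xv1 ∪ Xv2) (Cv1 ∪ Cv2) Ψ τ =
      S.wweight ω Xv1 Cv1 Ψ1 τ1 + S.wweight ω Xv2 Cv2 Ψ2 τ2
      + ∑ c ∈ Cv1, ω c * ((min (Φ2 c : ℤ) ((S.γ c : ℤ) - (Ψ c : ℤ)) : ℤ) : ℝ)
      + ∑ c ∈ Cv2, ω c * ((min (Φ1 c : ℤ) ((S.γ c : ℤ) - (Ψ c : ℤ)) : ℤ) : ℝ) := by
  obtain ⟨-, -, -, -, -, -, -, hL2, hL3⟩ := hlink
  have hcb := S.cb_union hX h1 h2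
  have split1 := S.wweight_eq_add_of_cb_eq_add ω (fun c _ => hcb c)
    (fun c hc => hc2.apply_of_notMem (disjoint_left.mp hC hc)) hL2
  have split2 := S.wweight_eq_add_of_cb_eq_add ω (fun c _ => (hcb c).trans (add_comm _ _))
    (fun c hc => hc1.apply_of_notMem (disjoint_right.mp hC hc)) hL3
  rw [S.wweight_union_constraints ω _ hC, split1, split2]
  ring
end
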